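/- Let W : ℝ^{3×3} → [0,∞) satisfy α dist²(F,SO(3)) ≤ W(F) ≤ β dist²(F,SO(3)) for all F, and let Q : ℝ^{3×3} → [0,∞) be a quadratic form such that |W(Id + G) − Q(G)| ≤ r(|G|)|G|² for all G, where r : [0,∞] → [0,∞] is monotone with r(ε) → 0 as ε → 0. Then Q satisfies α|sym G|² ≤ Q(G) ≤ β|sym G|² for all G ∈ ℝ^{3×3}. In particular Q(G) = Q(sym G). -/
import Mathlib


open Matrix Filter

abbrev M3 := Matrix (Fin 3) (Fin 3) ℝ

noncomputable def frob (A : M3) : ℝ := Real.sqrt (∑ i, ∑ j, (A i j) ^ 2)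

def SO3 (R : M3) : Prop := Rᵀ * R = 1 ∧ R.det = 1

noncomputable def distSO (F : M3) : ℝ := sInf ((fun R => frob (F - R)) '' {R | SO3 R})

noncomputable def symPart (F : M3) : M3 := (1 / 2 : ℝ) • (F + Fᵀ)

/- ----------------- auxiliary development ----------------- -/

attribute [local instance] Matrix.frobeniusSeminormedAddCommGroup
  Matrix.frobeniusNormedAddCommGroup Matrix.frobeniusNormedSpace

lemma frob_eq_norm (A : M3) : frob A = ‖A‖ := by
  rw [Matrix.frobenius_norm_def, ← Real.sqrt_eq_rpow]
  unfold frob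
  congr 1
  refine Finset.sum_congr rfl fun i _ => Finset.sum_congr rfl fun j _ => ?_
  rw [Real.rpow_two, Real.norm_eq_abs, sq_abs]

lemma frob_nonneg (A : M3) : 0 ≤ frob A := (frob_eq_norm A) ▸ norm_nonneg _

lemma SO3_one : SO3 1 := ⟨by simp, Matrix.det_one⟩

lemma norm_symPart_le (A : M3) : ‖symPart A‖ ≤ ‖A‖ := by
  unfold symPart
  calc ‖(1/2 : ℝ) • (A + Aᵀ)‖ = (1/2) * ‖A + Aᵀ‖ := by
        rw [norm_smul]; norm_num
    _ ≤ (1/2) * (‖A‖ + ‖Aᵀ‖) := by gcongr; exact norm_add_le _ _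
    _ = ‖A‖ := by rw [Matrix.frobenius_norm_transpose]; ring

lemma symPart_sub (A B : M3) : symPart (A - B) = symPart A - symPart B := by
  simp only [symPart, Matrix.transpose_sub]
  module

lemma symPart_add (A B : M3) : symPart (A + B) = symPart A + symPart B := by
  simp only [symPart, Matrix.transpose_add]
  module

lemma symPart_smul (c : ℝ) (A : M3) : symPart (c • A) = c • symPart A := by
  simp only [symPart, Matrix.transpose_smul]
  module

lemma symPart_idem (A : M3) : symPart (symPart A) = symPart A := by
  simp only [symPart, Matrix.transpose_smul, Matrix.transpose_add, Matrix.transpose_transpose]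
  module

lemma symPart_so3 {R : M3} (hR : SO3 R) :
    symPart (R - 1) = (-(1/2) : ℝ) • ((R - 1)ᵀ * (R - 1)) := by
  have e : (R - 1)ᵀ * (R - 1) = 1 - Rᵀ - R + 1 := by
    rw [Matrix.transpose_sub, Matrix.transpose_one, sub_mul, mul_sub, one_mul, mul_one, hR.1]
    abel
  rw [e]
  simp only [symPart, Matrix.transpose_sub, Matrix.transpose_one]
  module

lemma distSO_le {F R : M3} (hR : SO3 R) : distSO F ≤ frob (F - R) := by
  apply csInf_le
  · exact ⟨0, by rintro x ⟨S, _, rfl⟩; exact frob_nonneg _⟩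
  · exact ⟨R, hR, rfl⟩

lemma distSO_lower (G : M3) (t : ℝ) (ht : 0 ≤ t) :
    t * frob (symPart G) - 2 * t^2 * frob G ^ 2 ≤ distSO (1 + t • G) := by
  refine le_csInf ⟨_, ⟨1, SO3_one, rfl⟩⟩ ?_
  rintro b ⟨R, hR, rfl⟩
  simp only [Set.mem_setOf_eq] at hR
  dsimp only
  rw [frob_eq_norm, frob_eq_norm, frob_eq_norm]
  set g := ‖G‖ with hgdef
  set sG := ‖symPart G‖ with hsdef
  set d := ‖1 + t • G - R‖ with hddef
  have hd0 : 0 ≤ d := norm_nonneg _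
  have hg0 : 0 ≤ g := norm_nonneg _
  have hsg : sG ≤ g := norm_symPart_le G
  have h2 : symPart (1 + t • G - R) = t • symPart G - symPart (R - 1) := by
    have : (1 : M3) + t • G - R = t • G - (R - 1) := by abel
    rw [this, symPart_sub, symPart_smul]
  have h1 : ‖t • symPart G - symPart (R - 1)‖ ≤ d := by
    rw [← h2]; exact norm_symPart_le _
  have h4 : ‖symPart (R - 1)‖ ≤ (1/2) * ‖R - 1‖^2 := by
    rw [symPart_so3 hR, norm_smul]
    have := Matrix.frobenius_norm_mul (R - 1)ᵀ (R - 1)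
    rw [Matrix.frobenius_norm_transpose] at this
    calc ‖(-(1/2) : ℝ)‖ * ‖(R - 1)ᵀ * (R - 1)‖ = (1/2) * ‖(R - 1)ᵀ * (R - 1)‖ := by
          norm_num
      _ ≤ (1/2) * (‖R - 1‖ * ‖R - 1‖) := by gcongr
      _ = (1/2) * ‖R - 1‖^2 := by ring
  have h5 : ‖R - 1‖ ≤ d + t * g := by
    have : R - 1 = -(1 + t • G - R) + t • G := by abel
    rw [this]
    refine (norm_add_le _ _).trans ?_
    rw [norm_neg, norm_smul, Real.norm_eq_abs, abs_of_nonneg ht]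
  have h6 : t * sG - ‖symPart (R - 1)‖ ≤ ‖t • symPart G - symPart (R - 1)‖ := by
    have := norm_sub_norm_le (t • symPart G) (symPart (R - 1))
    rw [norm_smul, Real.norm_eq_abs, abs_of_nonneg ht] at this
    linarith
  rcases le_or_gt d (t * g) with hcase | hcase
  · have hS0 : 0 ≤ ‖R - 1‖ := norm_nonneg _
    have hS2 : ‖R - 1‖^2 ≤ (2 * t * g)^2 := by nlinarith
    nlinarith
  · nlinarith [mul_le_mul_of_nonneg_left hsg ht, sq_nonneg (t*g)]

/- Explicit Cayley-type rotation. -/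

def skm (p q r : ℝ) : M3 := !![0,p,q; -p,0,r; -q,-r,0]

def cayN (p q r : ℝ) : M3 :=
  !![1+p^2+q^2+r^2 - 2*(p^2+q^2), 2*(p-q*r), 2*(q+p*r);
     2*(-p-q*r), 1+p^2+q^2+r^2-2*(p^2+r^2), 2*(r-p*q);
     2*(-q+p*r), 2*(-r-p*q), 1+p^2+q^2+r^2-2*(q^2+r^2)]

noncomputable def cay (p q r : ℝ) : M3 := (1/(1+p^2+q^2+r^2)) • cayN p q r

set_option maxHeartbeats 1000000 in
lemma cayN_transpose (p q r : ℝ) : (cayN p q r)ᵀ = cayN (-p) (-q) (-r) := by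
  ext i j
  rw [Matrix.transpose_apply]
  fin_cases i <;> fin_cases j <;> (simp [cayN] <;> try ring)

set_option maxHeartbeats 1000000 in
lemma cayN_mul (p q r : ℝ) :
    (cayN p q r)ᵀ * cayN p q r = ((1+p^2+q^2+r^2)^2) • 1 := by
  rw [cayN_transpose]
  ext i j
  fin_cases i <;> fin_cases j <;>
    (simp [cayN, Matrix.mul_apply, Fin.sum_univ_three, Matrix.one_apply] <;> try ring)

set_option maxHeartbeats 1000000 in
lemma cayN_det (p q r : ℝ) : (cayN p q r).det = (1+p^2+q^2+r^2)^3 := by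
  rw [Matrix.det_fin_three]
  simp only [cayN, Matrix.cons_val', Matrix.cons_val_zero, Matrix.cons_val_one,
    Matrix.head_cons, Matrix.head_fin_const, Matrix.empty_val', Matrix.cons_val_fin_one,
    Matrix.of_apply, Matrix.cons_val_two, Matrix.tail_cons]
  ring

set_option maxHeartbeats 1000000 in
lemma cayN_eq (p q r : ℝ) :
    cayN p q r = (1+p^2+q^2+r^2) • (1 : M3) + (2:ℝ) • (skm p q r + skm p q r * skm p q r) := by
  ext i j
  fin_cases i <;> fin_cases j <;>
    (simp [cayN, skm, Matrix.mul_apply, Fin.sum_univ_three, Matrix.one_apply] <;> try ring)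

lemma cay_SO3 (p q r : ℝ) : SO3 (cay p q r) := by
  have hd : (1+p^2+q^2+r^2) ≠ 0 := by positivity
  have h2 : 1/(1+p^2+q^2+r^2) * (1/(1+p^2+q^2+r^2)) * ((1+p^2+q^2+r^2)^2) = 1 := by
    field_simp
  constructor
  · rw [cay, Matrix.transpose_smul, Matrix.smul_mul, Matrix.mul_smul, cayN_mul, smul_smul,
      smul_smul, h2, one_smul]
  · rw [cay, Matrix.det_smul, cayN_det]
    simp only [Fintype.card_fin]
    field_simp

lemma cay_eq (p q r : ℝ) :
    cay p q r = 1 + (2/(1+p^2+q^2+r^2)) • (skm p q r + skm p q r * skm p q r) := by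
  have hd : (1+p^2+q^2+r^2) ≠ 0 := by positivity
  rw [cay, cayN_eq, smul_add, smul_smul, smul_smul,
    show (1/(1+p^2+q^2+r^2)) * (1+p^2+q^2+r^2) = 1 by field_simp,
    show (1/(1+p^2+q^2+r^2)) * 2 = 2/(1+p^2+q^2+r^2) by ring, one_smul]

lemma norm_skm_sq (p q r : ℝ) : ‖skm p q r‖^2 = 2*(p^2+q^2+r^2) := by
  rw [← frob_eq_norm]
  unfold frob
  rw [Real.sq_sqrt (by positivity)]
  simp [skm, Fin.sum_univ_three]
  ring

lemma distSO_upper (G : M3) (t : ℝ) (ht : 0 ≤ t) :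
    distSO (1 + t • G) ≤ t * frob (symPart G) + (t * frob G)^3 + 2 * (t * frob G)^2 := by
  set K : M3 := (1/2 : ℝ) • (G - Gᵀ) with hK
  set p := (t/2) * (K 0 1) with hp
  set q := (t/2) * (K 0 2) with hq
  set rr := (t/2) * (K 1 2) with hrr
  have hB : skm p q rr = (t/2) • K := by
    ext i j
    fin_cases i <;> fin_cases j <;>
      (simp [skm, hp, hq, hrr, hK, Matrix.smul_apply, Matrix.sub_apply,
        Matrix.transpose_apply] <;> try ring)
  have htG : t • G = t • symPart G + (2:ℝ) • ((t/2) • K) := by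
    simp only [symPart, hK]
    module
  have hFR : 1 + t • G - cay p q rr
      = t • symPart G + (2 - 2/(1+p^2+q^2+rr^2)) • ((t/2) • K)
        - (2/(1+p^2+q^2+rr^2)) • (((t/2) • K) * ((t/2) • K)) := by
    rw [cay_eq, hB, htG]
    module
  have hb2 : (0:ℝ) ≤ p^2+q^2+rr^2 := by positivity
  have hd1 : (1:ℝ) ≤ 1+p^2+q^2+rr^2 := by linarith
  set k := 2/(1+p^2+q^2+rr^2) with hk
  have hk0 : 0 ≤ k := by positivity
  have hk2 : k ≤ 2 := by
    rw [hk]; exact div_le_self (by norm_num) hd1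
  set bn := ‖(t/2) • K‖ with hbn
  have hbn0 : 0 ≤ bn := norm_nonneg _
  have hbnsq : bn^2 = 2*(p^2+q^2+rr^2) := by
    rw [hbn, ← hB, norm_skm_sq]
  have h2k : 2 - k ≤ bn^2 := by
    rw [hbnsq, hk]
    have : 2 - 2/(1+p^2+q^2+rr^2) = 2*(p^2+q^2+rr^2)/(1+p^2+q^2+rr^2) := by
      field_simp
      ring
    rw [this]
    exact div_le_self (by positivity) hd1
  have h2k' : 0 ≤ 2 - k := by linarith
  have hbb : ‖((t/2) • K) * ((t/2) • K)‖ ≤ bn^2 := by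
    rw [sq]; exact Matrix.frobenius_norm_mul _ _
  have hKg : ‖K‖ ≤ frob G := by
    rw [hK, frob_eq_norm]
    calc ‖(1/2 : ℝ) • (G - Gᵀ)‖ = (1/2) * ‖G - Gᵀ‖ := by rw [norm_smul]; norm_num
      _ ≤ (1/2) * (‖G‖ + ‖Gᵀ‖) := by gcongr; exact norm_sub_le _ _
      _ = ‖G‖ := by rw [Matrix.frobenius_norm_transpose]; ring
  have hbntg : bn ≤ t * frob G := by
    rw [hbn, norm_smul, Real.norm_eq_abs, abs_of_nonneg (by linarith : (0:ℝ) ≤ t/2)]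
    calc t/2 * ‖K‖ ≤ t/2 * frob G := by
          apply mul_le_mul_of_nonneg_left hKg; linarith
      _ ≤ t * frob G := by nlinarith [frob_nonneg G]
  have hchain : distSO (1 + t • G) ≤ t * frob (symPart G) + (2-k) * bn + k * bn^2 := by
    refine (distSO_le (cay_SO3 p q rr)).trans ?_
    rw [frob_eq_norm, hFR]
    calc ‖t • symPart G + (2 - k) • ((t/2) • K) - k • (((t/2) • K) * ((t/2) • K))‖
        ≤ ‖t • symPart G + (2 - k) • ((t/2) • K)‖ + ‖k • (((t/2) • K) * ((t/2) • K))‖ :=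
          norm_sub_le _ _
      _ ≤ ‖t • symPart G‖ + ‖(2 - k) • ((t/2) • K)‖ + ‖k • (((t/2) • K) * ((t/2) • K))‖ := by
          gcongr; exact norm_add_le _ _
      _ ≤ t * frob (symPart G) + (2-k) * bn + k * bn^2 := by
          have n1 : ‖t • symPart G‖ = t * frob (symPart G) := by
            rw [norm_smul, Real.norm_eq_abs, abs_of_nonneg ht, frob_eq_norm]
          have n2 : ‖(2 - k) • ((t/2) • K)‖ = (2-k) * bn := by
            rw [norm_smul, Real.norm_eq_abs, abs_of_nonneg h2k']
          have n3 : ‖k • (((t/2) • K) * ((t/2) • K))‖ ≤ k * bn^2 := by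
            rw [norm_smul, Real.norm_eq_abs, abs_of_nonneg hk0]
            exact mul_le_mul_of_nonneg_left hbb hk0
          rw [n1, n2]
          linarith
  have e3 : bn^3 ≤ (t * frob G)^3 := by
    apply pow_le_pow_left₀ hbn0 hbntg
  have e2 : bn^2 ≤ (t * frob G)^2 := by
    apply pow_le_pow_left₀ hbn0 hbntg
  nlinarith [hchain, mul_le_mul_of_nonneg_left e2 hk0, sq_nonneg bn]

lemma frob_zero : frob 0 = 0 := by rw [frob_eq_norm, norm_zero]

lemma frob_smul (c : ℝ) (A : M3) : frob (c • A) = |c| * frob A := by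
  rw [frob_eq_norm, frob_eq_norm, norm_smul, Real.norm_eq_abs]

/-- If `α dist² ≤ W ≤ β dist²` and `Q` is a quadratic form with
`|W(Id + G) − Q(G)| ≤ r(|G|)|G|²` for a monotone `r` with `r(ε) → 0` as `ε → 0`,
then `α|sym G|² ≤ Q(G) ≤ β|sym G|²`; in particular `Q(G) = Q(sym G)`. -/
theorem quadratic_form_from_energy (α β : ℝ) (hα : 0 < α) (hαβ : α ≤ β)
    (W : M3 → ℝ) (hW0 : ∀ F, 0 ≤ W F)
    (hWbounds : ∀ F, α * distSO F ^ 2 ≤ W F ∧ W F ≤ β * distSO F ^ 2)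
    (Q : M3 → ℝ) (Bil : M3 →ₗ[ℝ] M3 →ₗ[ℝ] ℝ)
    (hBilSymm : ∀ F G, Bil F G = Bil G F)
    (hQ : ∀ F, Q F = (1 / 2 : ℝ) * Bil F F)
    (r : ℝ → ℝ) (hrmono : Monotone r) (hr0 : ∀ ε, 0 ≤ r ε)
    (hrlim : Tendsto r (nhdsWithin 0 (Set.Ioi 0)) (nhds 0))
    (htaylor : ∀ G : M3, |W (1 + G) - Q G| ≤ r (frob G) * frob G ^ 2) :
    ∀ G : M3, (α * frob (symPart G) ^ 2 ≤ Q G ∧ Q G ≤ β * frob (symPart G) ^ 2)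
      ∧ Q G = Q (symPart G) := by

  have key : ∀ G : M3, α * frob (symPart G) ^ 2 ≤ Q G ∧ Q G ≤ β * frob (symPart G) ^ 2 := by
    intro G
    by_cases hG : G = 0
    · subst hG
      have h0 : symPart (0 : M3) = 0 := by
        simp [symPart]
      have hQ0 : Q 0 = 0 := by
        have := hQ 0
        simp at this
        exact this
      rw [h0, hQ0, frob_zero]
      norm_num
    · set g := frob G with hg
      set s := frob (symPart G) with hs
      have hg0 : 0 < g := by
        rw [hg, frob_eq_norm]
        exact norm_pos_iff.2 hG
      set D : ℝ → ℝ := fun t => distSO (1 + t • G) with hD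
      -- Step B: the quotient D t / t tends to s
      have hA : Tendsto (fun t => D t / t) (nhdsWithin 0 (Set.Ioi 0)) (nhds s) := by
        have clow : Continuous fun t : ℝ => s - 2 * t * g^2 := by continuity
        have cup : Continuous fun t : ℝ => s + t^2 * g^3 + 2 * t * g^2 := by continuity
        have hlow : Tendsto (fun t : ℝ => s - 2 * t * g^2) (nhdsWithin 0 (Set.Ioi 0)) (nhds s) := by
          have := Filter.Tendsto.mono_left (clow.tendsto 0)
            (nhdsWithin_le_nhds (s := Set.Ioi (0:ℝ)))
          simpa using this
        have hup : Tendsto (fun t : ℝ => s + t^2 * g^3 + 2 * t * g^2)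
            (nhdsWithin 0 (Set.Ioi 0)) (nhds s) := by
          have := Filter.Tendsto.mono_left (cup.tendsto 0)
            (nhdsWithin_le_nhds (s := Set.Ioi (0:ℝ)))
          simpa using this
        refine tendsto_of_tendsto_of_tendsto_of_le_of_le' hlow hup ?_ ?_
        · filter_upwards [self_mem_nhdsWithin] with t ht
          have ht' : (0:ℝ) < t := ht
          rw [le_div_iff₀ ht']
          have := distSO_lower G t ht'.le
          rw [← hg, ← hs] at this
          nlinarith
        · filter_upwards [self_mem_nhdsWithin] with t ht
          have ht' : (0:ℝ) < t := ht
          rw [div_le_iff₀ ht']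
          have := distSO_upper G t ht'.le
          rw [← hg, ← hs] at this
          nlinarith
      -- Step A: W (1 + t • G) / t^2 tends to Q G
      have hQt : ∀ t : ℝ, Q (t • G) = t^2 * Q G := by
        intro t
        simp only [hQ, LinearMap.map_smul, LinearMap.smul_apply, smul_eq_mul]
        ring
      have hB : Tendsto (fun t => W (1 + t • G) / t^2) (nhdsWithin 0 (Set.Ioi 0))
          (nhds (Q G)) := by
        have hmul : Tendsto (fun t : ℝ => t * g) (nhdsWithin 0 (Set.Ioi 0))
            (nhdsWithin 0 (Set.Ioi 0)) := by
          rw [tendsto_nhdsWithin_iff]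
          constructor
          · have : Continuous fun t : ℝ => t * g := by continuity
            have h := (this.tendsto 0).mono_left
              (nhdsWithin_le_nhds (s := Set.Ioi (0:ℝ)))
            simpa using h
          · filter_upwards [self_mem_nhdsWithin] with t ht
            exact mul_pos ht hg0
        have hr2 : Tendsto (fun t : ℝ => r (t * g) * g^2) (nhdsWithin 0 (Set.Ioi 0))
            (nhds 0) := by
          have := (hrlim.comp hmul).mul_const (g^2)
          simpa using this
        have hev : ∀ᶠ t in nhdsWithin 0 (Set.Ioi 0),
            ‖W (1 + t • G) / t^2 - Q G‖ ≤ r (t * g) * g^2 := by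
          filter_upwards [self_mem_nhdsWithin] with t ht
          have ht' : (0:ℝ) < t := ht
          have h := htaylor (t • G)
          rw [frob_smul, abs_of_nonneg ht'.le, ← hg, hQt] at h
          have heq : W (1 + t • G) / t^2 - Q G = (W (1 + t • G) - t^2 * Q G) / t^2 := by
            field_simp
          rw [Real.norm_eq_abs, heq, abs_div, abs_of_nonneg (by positivity : (0:ℝ) ≤ t^2),
            div_le_iff₀ (by positivity : (0:ℝ) < t^2)]
          nlinarith [h]
        have h0 : Tendsto (fun t => W (1 + t • G) / t^2 - Q G) (nhdsWithin 0 (Set.Ioi 0))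
            (nhds 0) := squeeze_zero_norm' hev hr2
        have := h0.add_const (Q G)
        simpa using this
      have hA2 : Tendsto (fun t => (D t / t)^2) (nhdsWithin 0 (Set.Ioi 0)) (nhds (s^2)) :=
        hA.pow 2
      constructor
      · refine le_of_tendsto_of_tendsto (hA2.const_mul α) hB ?_
        filter_upwards [self_mem_nhdsWithin] with t ht
        have ht' : (0:ℝ) < t := ht
        have h := (hWbounds (1 + t • G)).1
        rw [div_pow, ← mul_div_assoc]
        exact (div_le_div_iff_of_pos_right (by positivity)).2 h
      · refine le_of_tendsto_of_tendsto hB (hA2.const_mul β) ?_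
        filter_upwards [self_mem_nhdsWithin] with t ht
        have ht' : (0:ℝ) < t := ht
        have h := (hWbounds (1 + t • G)).2
        rw [div_pow, ← mul_div_assoc]
        exact (div_le_div_iff_of_pos_right (by positivity)).2 h
  intro G
  refine ⟨key G, ?_⟩
  set Sg := symPart G with hSg
  set A := G - Sg with hA
  have hsymSg : symPart Sg = Sg := symPart_idem G
  have hsymA : symPart A = 0 := by
    rw [hA, symPart_sub, hsymSg, sub_self]
  have hQA : Q A = 0 := by
    have h1 := (key A).1
    have h2 := (key A).2
    rw [hsymA, frob_zero] at h1 h2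
    nlinarith
  have hexp : ∀ c : ℝ, Q (Sg + c • A) = Q Sg + c * Bil Sg A + c^2 * Q A := by
    intro c
    simp only [hQ, LinearMap.map_add, LinearMap.map_smul, LinearMap.add_apply,
      LinearMap.smul_apply, smul_eq_mul, hBilSymm A Sg]
    ring
  have hub : ∀ c : ℝ, Q Sg + c * Bil Sg A ≤ β * frob Sg ^ 2 := by
    intro c
    have h := (key (Sg + c • A)).2
    rw [symPart_add, symPart_smul, hsymA, hsymSg, smul_zero, add_zero] at h
    rw [hexp, hQA] at h
    linarith
  have hBil0 : Bil Sg A = 0 := by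
    by_contra h
    have h1 := hub ((β * frob Sg ^ 2 - Q Sg + 1) / Bil Sg A)
    rw [div_mul_cancel₀ _ h] at h1
    linarith
  have hG1 : G = Sg + (1:ℝ) • A := by rw [one_smul, hA]; abel
  rw [hG1, hexp, hQA, hBil0]
  ring
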